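/- For the 3-step nilpotent Lie algebra g_{5,3} ([a,b]=d, [a,d]=e, [b,c]=e) with bracket μ, and the cocycle ν2 defined by ν2(a,b)=b, ν2(a,c)=−c, ν2(a,d)=−d (zero on other basis pairs), the bilinear map μ + tν2 is a Lie bracket (satisfies Jacobi) for every t ∈ ℝ, and for t ≠ 0 the resulting Lie algebra is solvable but not nilpotent. -/

import Mathlib

noncomputable section

/-- Standard basis vector of `ℝ⁵`. -/
def e (k : Fin 5) : Fin 5 → ℝ := Pi.single k 1

/-- Structure constants of `g_{5,3}`: `[a,b]=d, [a,d]=e, [b,c]=e`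
(basis `a,…,e = e 0,…,e 4`), extended antisymmetrically. -/
def tbl : Fin 5 → Fin 5 → Fin 5 → ℝ :=
  ![![0, e 3, 0, e 4, 0],
    ![-e 3, 0, e 4, 0, 0],
    ![0, -e 4, 0, 0, 0],
    ![-e 4, 0, 0, 0, 0],
    ![0, 0, 0, 0, 0]]

/-- The bracket `μ` of `g_{5,3}`. -/
def br (x y : Fin 5 → ℝ) : Fin 5 → ℝ :=
  ∑ p : Fin 5, ∑ q : Fin 5, (x p * y q) • tbl p q

/-- Structure constants of the cocycle `ν₂`: `ν₂(a,b)=b, ν₂(a,c)=−c, ν₂(a,d)=−d`,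
zero on other basis pairs, extended antisymmetrically. -/
def tblν : Fin 5 → Fin 5 → Fin 5 → ℝ :=
  ![![0, e 1, -e 2, -e 3, 0],
    ![-e 1, 0, 0, 0, 0],
    ![e 2, 0, 0, 0, 0],
    ![e 3, 0, 0, 0, 0],
    ![0, 0, 0, 0, 0]]

/-- The bilinear map `ν₂`. -/
def ν (x y : Fin 5 → ℝ) : Fin 5 → ℝ :=
  ∑ p : Fin 5, ∑ q : Fin 5, (x p * y q) • tblν p q

/-- The deformed bracket `μ + t ν₂`. -/
def brt (t : ℝ) (x y : Fin 5 → ℝ) : Fin 5 → ℝ := br x y + t • ν x y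

/-- Lower central series of a bracket. -/
def lcs (μ : (Fin 5 → ℝ) → (Fin 5 → ℝ) → (Fin 5 → ℝ)) : ℕ → Submodule ℝ (Fin 5 → ℝ)
  | 0 => ⊤
  | j + 1 => Submodule.span ℝ {w | ∃ u ∈ lcs μ j, ∃ v, w = μ u v}

/-- Derived series of a bracket. -/
def ds (μ : (Fin 5 → ℝ) → (Fin 5 → ℝ) → (Fin 5 → ℝ)) : ℕ → Submodule ℝ (Fin 5 → ℝ)
  | 0 => ⊤
  | j + 1 => Submodule.span ℝ {w | ∃ u ∈ ds μ j, ∃ v ∈ ds μ j, w = μ u v}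

/-!
In coordinates the deformed bracket is an explicit quadratic map (`brt_eq`), and the Jacobi
identity is a polynomial identity in the coordinates. No bracket has an `a`-component, and the
bracket of two vectors without `a`-component is a multiple of the central vector `e`, so the
derived series vanishes at step three. On the other hand `[c, a] = t c`, so for `t ≠ 0` the
vector `c` survives in every term of the lower central series.
-/

theorem brt_eq (t : ℝ) (x y : Fin 5 → ℝ) :
    brt t x y = ![0, t * (x 0 * y 1 - x 1 * y 0), -(t * (x 0 * y 2 - x 2 * y 0)),
      (x 0 * y 1 - x 1 * y 0) - t * (x 0 * y 3 - x 3 * y 0),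
      (x 0 * y 3 - x 3 * y 0) + (x 1 * y 2 - x 2 * y 1)] := by
  funext i
  fin_cases i <;> simp [brt, br, ν, tbl, tblν, e, Fin.sum_univ_five] <;> ring

theorem brt_jacobi (t : ℝ) (x y z : Fin 5 → ℝ) :
    brt t (brt t x y) z + brt t (brt t y z) x + brt t (brt t z x) y = 0 := by
  simp only [brt_eq]
  funext i
  fin_cases i <;> simp <;> ring

theorem brt_e_two_e_zero (t : ℝ) : brt t (e 2) (e 0) = t • e 2 := by
  funext i
  fin_cases i <;> simp [brt_eq, e]

def vanishingOn {ι : Type*} (s : Set ι) : Submodule ℝ (ι → ℝ) :=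
  Submodule.pi s fun _ => ⊥

theorem mem_vanishingOn {ι : Type*} {s : Set ι} {v : ι → ℝ} :
    v ∈ vanishingOn s ↔ ∀ i ∈ s, v i = 0 := by
  simp [vanishingOn, Submodule.mem_pi]

theorem brt_mem_vanishingOn_zero (t : ℝ) (u v : Fin 5 → ℝ) : brt t u v ∈ vanishingOn {0} := by
  simp [mem_vanishingOn, brt_eq]

theorem brt_mem_vanishingOn_of_mem_vanishingOn_zero (t : ℝ) {u v : Fin 5 → ℝ}
    (hu : u ∈ vanishingOn {0}) (hv : v ∈ vanishingOn {0}) :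
    brt t u v ∈ vanishingOn {0, 1, 2, 3} := by
  simp only [mem_vanishingOn, Set.mem_singleton_iff, forall_eq] at hu hv
  simp [mem_vanishingOn, brt_eq, hu, hv]

theorem brt_eq_zero_of_mem_vanishingOn (t : ℝ) {u v : Fin 5 → ℝ}
    (hu : u ∈ vanishingOn {0, 1, 2, 3}) (hv : v ∈ vanishingOn {0, 1, 2, 3}) :
    brt t u v = 0 := by
  simp only [mem_vanishingOn, Set.mem_insert_iff, Set.mem_singleton_iff, forall_eq_or_imp,
    forall_eq] at hu hv
  funext i
  fin_cases i <;> simp [brt_eq, hu, hv]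

theorem ds_succ_le {μ : (Fin 5 → ℝ) → (Fin 5 → ℝ) → (Fin 5 → ℝ)} {j : ℕ}
    {S T : Submodule ℝ (Fin 5 → ℝ)} (hS : ds μ j ≤ S) (hST : ∀ u ∈ S, ∀ v ∈ S, μ u v ∈ T) :
    ds μ (j + 1) ≤ T :=
  Submodule.span_le.2 <| by
    rintro _ ⟨u, hu, v, hv, rfl⟩
    exact hST u (hS hu) v (hS hv)

theorem ds_brt_three (t : ℝ) : ds (brt t) 3 = ⊥ := by
  have h1 : ds (brt t) 1 ≤ vanishingOn {0} :=
    ds_succ_le le_rfl fun u _ v _ => brt_mem_vanishingOn_zero t u v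
  have h2 : ds (brt t) 2 ≤ vanishingOn {0, 1, 2, 3} :=
    ds_succ_le h1 fun _ hu _ hv => brt_mem_vanishingOn_of_mem_vanishingOn_zero t hu hv
  refine le_bot_iff.1 (ds_succ_le h2 fun _ hu _ hv => ?_)
  rw [brt_eq_zero_of_mem_vanishingOn t hu hv]
  exact zero_mem _

theorem mem_lcs_of_bracket_eq_smul {μ : (Fin 5 → ℝ) → (Fin 5 → ℝ) → (Fin 5 → ℝ)}
    {v w : Fin 5 → ℝ} {c : ℝ} (hc : c ≠ 0) (hvw : μ v w = c • v) (j : ℕ) : v ∈ lcs μ j := by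
  induction j with
  | zero => trivial
  | succ j ih =>
    have hcv : c • v ∈ lcs μ (j + 1) := Submodule.subset_span ⟨v, ih, w, hvw.symm⟩
    simpa [smul_smul, inv_mul_cancel₀ hc] using Submodule.smul_mem _ c⁻¹ hcv

/-- `μ + tν₂` is a Lie bracket for every `t ∈ ℝ`, and for `t ≠ 0` the resulting Lie
algebra is solvable but not nilpotent. -/
theorem g53_deformation_solvable_not_nilpotent :
    (∀ t : ℝ, ∀ x y z : Fin 5 → ℝ,
      brt t (brt t x y) z + brt t (brt t y z) x + brt t (brt t z x) y = 0) ∧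
    (∀ t : ℝ, t ≠ 0 →
      (∃ j : ℕ, ds (brt t) j = ⊥) ∧ (∀ j : ℕ, lcs (brt t) j ≠ ⊥)) := by
  refine ⟨brt_jacobi, fun t ht => ⟨⟨3, ds_brt_three t⟩, fun j => ?_⟩⟩
  have hc : e 2 ∈ lcs (brt t) j := mem_lcs_of_bracket_eq_smul ht (brt_e_two_e_zero t) j
  exact (Submodule.ne_bot_iff _).2 ⟨e 2, hc, Pi.single_ne_zero_iff.2 one_ne_zero⟩
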